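/- arXiv:2402.17473 — 6 statements merged into one kernel-verified Lean document; each statement's English description precedes it below -/
import Mathlib

section
/- Let X ⊆ S. Then the maximum size of a partial transversal of the set system (A(e), e ∈ E) that is contained in X equals the maximum height of a labeling of G with respect to the α-vector α(X). (This is the identification r = r_𝒜 in Theorem 1(a): the rank function of the matroid M = (S, r) is the rank function of the transversal matroid M[𝒜].) -/
open Finset

variable {V E : Type*}

/-- Degree of a vertex in the multigraph given by `ends : E → Sym2 V`
(a loop contributes 2). -/
def mdeg [Fintype E] [DecidableEq V] (ends : E → Sym2 V) (v : V) : ℕ :=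
  ∑ e : E, (if ends e = Sym2.mk v v then 2 else if v ∈ ends e then 1 else 0)

/-- The ground set `S = {(v,i) : 1 ≤ i ≤ deg v}`. -/
def mS [Fintype V] [Fintype E] [DecidableEq V] (ends : E → Sym2 V) : Finset (V × ℕ) :=
  Finset.univ.biUnion fun v => (Finset.Icc 1 (mdeg ends v)).image fun i => (v, i)

/-- `A(e) = {(x,i) ∈ S : x is an endpoint of e}`. -/
def mA [Fintype V] [Fintype E] [DecidableEq V] (ends : E → Sym2 V) (e : E) :
    Finset (V × ℕ) :=
  (mS ends).filter fun p => p.1 ∈ ends e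

/-- `B` is a partial transversal of the set system `(A(e), e ∈ F)`. -/
def IsPT [Fintype V] [Fintype E] [DecidableEq V] (ends : E → Sym2 V) (F : Finset E)
    (B : Finset (V × ℕ)) : Prop :=
  ∃ f : V × ℕ → E, Set.InjOn f ↑B ∧ ∀ b ∈ B, f b ∈ F ∧ b ∈ mA ends (f b)

/-- A labeling of the graph with respect to a vector `α : V → ℕ`. -/
def IsLabeling [Fintype E] [DecidableEq V] (ends : E → Sym2 V) (α : V → ℕ)
    (φ : E → Option V) : Prop :=
  (∀ e v, φ e = some v → v ∈ ends e) ∧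
    ∀ v, (Finset.univ.filter fun e => φ e = some v).card ≤ α v

/-- The height of a labeling. -/
def height [Fintype E] [DecidableEq V] (φ : E → Option V) : ℕ :=
  (Finset.univ.filter fun e => φ e ≠ none).card

/-- `alphaVec X v = m_X(v)`, the α-vector of `X`. -/
def alphaVec [DecidableEq V] (X : Finset (V × ℕ)) (v : V) : ℕ :=
  (X.filter fun p => p.1 = v).card

/-! A partial transversal `B ⊆ X`, matched by `f : B → E`, gives the labeling `f b ↦ b.1` of
height `|B|`; its fibre over `v` is the image of `B`'s elements over `v`, so it has at most
`m_X(v)` edges. Conversely, since a labeling puts at most `m_X(v)` edges over `v`, those edges can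
be matched injectively into the elements of `X` over `v`; the first coordinate recovers the label,
so these fibrewise matchings glue to a partial transversal in `X` of size the height. -/

theorem csSup_eq_csSup_of_subset_of_subset_insert_bot {α : Type*}
    [ConditionallyCompleteLinearOrderBot α] {s t : Set α} (ht : BddAbove t) (hst : s ⊆ t)
    (hts : t ⊆ insert ⊥ s) : sSup s = sSup t := by
  refine le_antisymm (csSup_le_csSup' ht hst) ?_
  calc sSup t ≤ sSup (insert ⊥ s) := csSup_le_csSup' ((ht.mono hst).insert ⊥) hts
    _ = sSup s := by rw [csSup_insert' (ht.mono hst), bot_sup_eq]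

theorem Finset.exists_injOn_fiberwise_of_card_filter_le {α β γ : Type*} [DecidableEq γ]
    [Nonempty β] {s : Finset α} {t : Finset β} (f : α → γ) (g : β → γ)
    (h : ∀ c, #{a ∈ s | f a = c} ≤ #{b ∈ t | g b = c}) :
    ∃ i : α → β, Set.InjOn i s ∧ ∀ a ∈ s, i a ∈ t ∧ g (i a) = f a := by
  have fiber_injOn (c : γ) : ∃ i : α → β,
      (↑{a ∈ s | f a = c} : Set α) ⊆ i ⁻¹' ↑{b ∈ t | g b = c} ∧
        Set.InjOn i ↑{a ∈ s | f a = c} :=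
    (Finset.finite_toSet _).exists_injOn_of_encard_le (by
      simpa only [Set.encard_coe_eq_coe_finsetCard, Nat.cast_le] using h c)
  choose i hmaps hinj using fiber_injOn
  have hfiber : ∀ a ∈ s, i (f a) a ∈ t ∧ g (i (f a) a) = f a := fun a ha => by
    simpa using hmaps (f a) (by simp [ha])
  refine ⟨fun a => i (f a) a, fun a ha a' ha' heq => ?_, hfiber⟩
  have hf : f a' = f a := by
    rw [← (hfiber a' ha').2, ← (hfiber a ha).2]
    exact congrArg g heq.symm
  simp only [hf] at heq
  exact hinj (f a) (by simpa using ha) (by simpa [hf] using ha') heq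

theorem Set.InjOn.exists_option_eq_some_iff {β ε γ : Type*} {s : Set β} {f : β → ε}
    (hf : s.InjOn f) (ℓ : β → γ) :
    ∃ φ : ε → Option γ, ∀ e c, φ e = some c ↔ ∃ b ∈ s, f b = e ∧ ℓ b = c := by
  classical
  refine ⟨fun e => if h : ∃ b ∈ s, f b = e then some (ℓ h.choose) else none, fun e c => ?_⟩
  dsimp only
  constructor
  · intro hφ
    split_ifs at hφ with h
    exact ⟨h.choose, h.choose_spec.1, h.choose_spec.2, Option.some_injective _ hφ⟩
  · rintro ⟨b, hb, rfl, rfl⟩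
    have h : ∃ b' ∈ s, f b' = f b := ⟨b, hb, rfl⟩
    rw [dif_pos h, hf h.choose_spec.1 hb h.choose_spec.2]

section

variable [Fintype V] [Fintype E] [DecidableEq V] (ends : E → Sym2 V)

theorem exists_labeling_height_eq_card_of_isPT {X B : Finset (V × ℕ)} (hBX : B ⊆ X)
    (hB : IsPT ends univ B) :
    ∃ φ : E → Option V, IsLabeling ends (alphaVec X) φ ∧ height φ = #B := by
  classical
  obtain ⟨f, hinj, hf⟩ := hB
  obtain ⟨φ, hφ⟩ := hinj.exists_option_eq_some_iff Prod.fst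
  have hfiber (v : V) : ({e | φ e = some v} : Finset E) = {b ∈ B | b.1 = v}.image f := by
    ext e
    simp [hφ]
  have hlabeled : ({e | φ e ≠ none} : Finset E) = B.image f := by
    ext e
    simp [Option.ne_none_iff_exists', hφ]
  refine ⟨φ, ⟨fun e v he => ?_, fun v => ?_⟩, ?_⟩
  · obtain ⟨b, hb, rfl, rfl⟩ := (hφ e v).1 he
    exact (mem_filter.1 (hf b hb).2).2
  · rw [hfiber, alphaVec]
    exact card_image_le.trans (card_le_card (filter_subset_filter _ hBX))
  · rw [height, hlabeled, card_image_of_injOn hinj]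

theorem isPT_image_of_injOn [Nonempty E] {D : Finset E} {j : E → V × ℕ}
    (hj : Set.InjOn j D) (hmem : ∀ e ∈ D, j e ∈ mA ends e) : IsPT ends univ (D.image j) := by
  have hinv : ∀ e ∈ D, Function.invFunOn j D (j e) = e := fun e he =>
    hj.leftInvOn_invFunOn he
  refine ⟨Function.invFunOn j D, ?_, ?_⟩
  · rintro _ hb _ hb' heq
    obtain ⟨e, he, rfl⟩ := mem_image.1 hb
    obtain ⟨e', he', rfl⟩ := mem_image.1 hb'
    rw [hinv e he, hinv e' he'] at heq
    rw [heq]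
  · intro b hb
    obtain ⟨e, he, rfl⟩ := mem_image.1 hb
    rw [hinv e he]
    exact ⟨mem_univ e, hmem e he⟩

theorem exists_isPT_card_eq_height [Nonempty E] {X : Finset (V × ℕ)} (hX : X ⊆ mS ends)
    {φ : E → Option V} (hφ : IsLabeling ends (alphaVec X) φ) :
    ∃ B ⊆ X, IsPT ends univ B ∧ #B = height φ := by
  have : Nonempty V := ⟨(ends (Classical.arbitrary E)).out.1⟩
  obtain ⟨j, hj, hjX⟩ := exists_injOn_fiberwise_of_card_filter_le (s := {e | φ e ≠ none})
    (t := X) φ (some ∘ Prod.fst) fun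
      | none => by simp
      | some v => by
        simpa [alphaVec] using (card_le_card (filter_subset_filter _ (subset_univ _))).trans
          (hφ.2 v)
  refine ⟨_, fun b hb => ?_, isPT_image_of_injOn ends hj fun e he => ?_,
    card_image_of_injOn hj⟩
  · obtain ⟨e, he, rfl⟩ := mem_image.1 hb
    exact (hjX e he).1
  · obtain ⟨hjeX, hje⟩ := hjX e he
    exact mem_filter.2 ⟨hX hjeX, hφ.1 e _ hje.symm⟩

end

/-- the max size of a partial transversal of `(A(e), e ∈ E)` contained in `X`
equals the max height of a labeling of `G` with respect to `α(X)`. -/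
theorem stmt0 [Fintype V] [Fintype E] [DecidableEq V] (ends : E → Sym2 V)
    (X : Finset (V × ℕ)) (hX : X ⊆ mS ends) :
    sSup {k : ℕ | ∃ B ⊆ X, IsPT ends Finset.univ B ∧ B.card = k} =
      sSup {m : ℕ | ∃ φ : E → Option V, IsLabeling ends (alphaVec X) φ ∧ height φ = m} := by
  refine csSup_eq_csSup_of_subset_of_subset_insert_bot ⟨Fintype.card E, ?_⟩ ?_ ?_
  · rintro _ ⟨φ, -, rfl⟩
    exact card_filter_le _ _
  · rintro _ ⟨B, hBX, hB, rfl⟩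
    exact exists_labeling_height_eq_card_of_isPT ends hBX hB
  · rintro _ ⟨φ, hφ, rfl⟩
    -- `IsPT` needs a total map `V × ℕ → E`, so for empty `E` the left set can miss `0`.
    rcases (height φ).eq_zero_or_pos with h | h
    · exact Or.inl h
    · have : Nonempty E := ⟨(card_pos.1 h).choose⟩
      exact Or.inr (exists_isPT_card_eq_height ends hX hφ)
end

section
/- Let X ⊆ S and let B ⊆ X be a partial transversal of the set system (A(e), e ∈ E) of size k. Then there exists a labeling of G with respect to α(X) of height k. (Intermediate claim in the proof of Theorem 1(a): from a partial transversal of size k contained in X one obtains a labeling of height k.) -/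
open Finset

variable {V E : Type*}

/-! Given the injection `f : B → E`, label the edge `f b` by the vertex of `b` and every other
edge by `∞`: each vertex `v` labels at most `m_B(v) ≤ m_X(v)` edges, and exactly `|B|` edges
are labelled. -/

section TransversalLabeling

open Classical in
noncomputable def transversalLabeling (f : V × ℕ → E) (B : Finset (V × ℕ)) : E → Option V :=
  fun e => if h : e ∈ f '' ↑B then some h.choose.1 else none

variable {f : V × ℕ → E} {B : Finset (V × ℕ)}

theorem transversalLabeling_eq_some {e : E} {v : V} (h : transversalLabeling f B e = some v) :
    ∃ b ∈ B, f b = e ∧ b.1 = v := by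
  unfold transversalLabeling at h
  split_ifs at h with he
  exact ⟨he.choose, he.choose_spec.1, he.choose_spec.2, Option.some.inj h⟩

variable [Fintype E] [DecidableEq V] (ends : E → Sym2 V)

theorem alphaVec_mono {X : Finset (V × ℕ)} (h : B ⊆ X) : alphaVec B ≤ alphaVec X :=
  fun _ => card_le_card (filter_subset_filter _ h)

theorem IsLabeling.mono {α β : V → ℕ} {φ : E → Option V} (hφ : IsLabeling ends α φ)
    (hαβ : α ≤ β) : IsLabeling ends β φ :=
  ⟨hφ.1, fun v => (hφ.2 v).trans (hαβ v)⟩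

theorem isLabeling_transversalLabeling (hmem : ∀ b ∈ B, b.1 ∈ ends (f b)) :
    IsLabeling ends (alphaVec B) (transversalLabeling f B) := by
  classical
  refine ⟨fun e v he => ?_, fun v => ?_⟩
  · obtain ⟨b, hb, rfl, rfl⟩ := transversalLabeling_eq_some he
    exact hmem b hb
  · have hsub : univ.filter (fun e => transversalLabeling f B e = some v) ⊆
        (B.filter fun b => b.1 = v).image f := by
      intro e he
      obtain ⟨b, hb, rfl, rfl⟩ := transversalLabeling_eq_some (mem_filter.1 he).2
      exact mem_image_of_mem f (mem_filter.2 ⟨hb, rfl⟩)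
    exact (card_le_card hsub).trans card_image_le

theorem height_transversalLabeling (hinj : Set.InjOn f ↑B) :
    height (transversalLabeling f B) = B.card := by
  classical
  have hsupp : univ.filter (fun e => transversalLabeling f B e ≠ none) = B.image f := by
    ext e
    simp [transversalLabeling, eq_comm]
  rw [height, hsupp, card_image_of_injOn hinj]

end TransversalLabeling

theorem stmt2_general [Fintype V] [Fintype E] [DecidableEq V] (ends : E → Sym2 V)
    (X : Finset (V × ℕ)) (B : Finset (V × ℕ)) (hB : B ⊆ X)
    (hPT : IsPT ends Finset.univ B) (k : ℕ) (hk : B.card = k) :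
    ∃ φ : E → Option V, IsLabeling ends (alphaVec X) φ ∧ height φ = k := by
  obtain ⟨f, hinj, hf⟩ := hPT
  have hmem : ∀ b ∈ B, b.1 ∈ ends (f b) := fun b hb => (mem_filter.1 (hf b hb).2).2
  exact ⟨transversalLabeling f B,
    (isLabeling_transversalLabeling ends hmem).mono ends (alphaVec_mono hB),
    (height_transversalLabeling hinj).trans hk⟩

/-- from a partial transversal of `(A(e), e ∈ E)` of size `k` contained in `X`,
one obtains a labeling of `G` with respect to `α(X)` of height `k`. -/
theorem stmt2 [Fintype V] [Fintype E] [DecidableEq V] (ends : E → Sym2 V)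
    (X : Finset (V × ℕ)) (hX : X ⊆ mS ends) (B : Finset (V × ℕ)) (hB : B ⊆ X)
    (hPT : IsPT ends Finset.univ B) (k : ℕ) (hk : B.card = k) :
    ∃ φ : E → Option V, IsLabeling ends (alphaVec X) φ ∧ height φ = k :=
  stmt2_general ends X B hB hPT k hk
end

section
/- There exists an injection f : E → S with f(e) ∈ A(e) for every edge e ∈ E; equivalently, the transversal matroid M[𝒜] on ground set S with presentation 𝒜 = (A(e), e ∈ E) has rank |E|. (Theorem 1(a): the matroid TM(G) has rank |E|; such an injection is obtained from any orientation of G by sending each edge to an unused copy of its tail.) -/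
open Finset

variable {V E : Type*}

/-! Orient every edge `e` towards a chosen endpoint, its tail. At most `deg v` edges get tail `v`,
so the edges with tail `v` can be sent injectively to the copies `(v, 1), …, (v, deg v)`. -/

theorem exists_injective_prod_of_card_fiber_le {α β : Type*} [Fintype α] [DecidableEq β]
    (t : α → β) (n : β → ℕ) (h : ∀ b, #{a | t a = b} ≤ n b) :
    ∃ f : α → β × ℕ, Function.Injective f ∧ ∀ a, (f a).1 = t a ∧ (f a).2 ∈ Icc 1 (n (t a)) := by
  have g : ∀ b, {a // t a = b} ↪ Fin (n b) := fun b =>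
    (Function.Embedding.nonempty_of_card_le (by simpa [Fintype.card_subtype] using h b)).some
  let toSigma : α ↪ Σ b, Fin (n b) :=
    (Equiv.sigmaFiberEquiv t).symm.toEmbedding.trans (Function.Embedding.sigmaMap (.refl β) g)
  refine ⟨fun a => ((toSigma a).1, (toSigma a).2 + 1), ?_, fun a => ⟨rfl, ?_⟩⟩
  · intro a a' haa'
    simp only [Prod.mk.injEq, add_left_inj] at haa'
    exact toSigma.injective (Sigma.ext haa'.1 (Fin.heq_ext_iff (congrArg n haa'.1) |>.mpr haa'.2))
  · exact mem_Icc.mpr ⟨Nat.le_add_left _ _, (toSigma a).2.isLt⟩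

theorem card_filter_mem_le_mdeg [Fintype E] [DecidableEq V] (ends : E → Sym2 V) (v : V) :
    #{e | v ∈ ends e} ≤ mdeg ends v := by
  rw [card_filter, mdeg]
  refine sum_le_sum fun e _ => ?_
  split_ifs <;> simp_all

theorem mem_mA_iff [Fintype V] [Fintype E] [DecidableEq V] (ends : E → Sym2 V) (e : E)
    (p : V × ℕ) : p ∈ mA ends e ↔ p.1 ∈ ends e ∧ p.2 ∈ Icc 1 (mdeg ends p.1) := by
  simp only [mA, mS, mem_filter, mem_biUnion, mem_image, mem_univ, true_and]
  constructor
  · rintro ⟨⟨v, i, hi, rfl⟩, hmem⟩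
    exact ⟨hmem, hi⟩
  · rintro ⟨hmem, hi⟩
    exact ⟨⟨p.1, p.2, hi, rfl⟩, hmem⟩

/-- there is an injection `f : E → S` with `f e ∈ A(e)` for all `e`,
i.e. the transversal matroid `TM(G)` has rank `|E|`. -/
theorem stmt3 [Fintype V] [Fintype E] [DecidableEq V] (ends : E → Sym2 V) :
    ∃ f : E → V × ℕ, Function.Injective f ∧ ∀ e : E, f e ∈ mA ends e := by
  let tail : E → V := fun e => (ends e).out.1
  have tail_mem : ∀ e, tail e ∈ ends e := fun e => Sym2.out_fst_mem (ends e)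
  have card_fiber_le : ∀ v, #{e | tail e = v} ≤ mdeg ends v := fun v =>
    (card_le_card (monotone_filter_right _ fun e _ (he : tail e = v) => he ▸ tail_mem e)).trans
      (card_filter_mem_le_mdeg ends v)
  obtain ⟨f, hinj, hf⟩ := exists_injective_prod_of_card_fiber_le tail _ card_fiber_le
  refine ⟨f, hinj, fun e => (mem_mA_iff ends e (f e)).mpr ?_⟩
  rw [(hf e).1]
  exact ⟨tail_mem e, (hf e).2⟩
end

section
/- Let B ⊆ S be a transversal of the set system (A(e), e ∈ E), i.e., a partial transversal with |B| = |E|. Then the complement S \ B is also a transversal of (A(e), e ∈ E). (Theorem 1(a): since |S| = 2|E|, this says that the transversal matroid TM(G) is identically self-dual: the complement of every basis is a basis.) -/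
open Finset

variable {V E : Type*}

/-!
Matching every edge `e` with its partner in the transversal `B` singles out an endpoint `u e`
of `e`, and exactly `m_B(v)` edges have `u e = v`. Let `w e` be the other endpoint. Since
`deg v` counts both ends of every edge, exactly `deg v - m_B(v) = m_{S \ B}(v)` edges have
`w e = v`, so the copies of `v` outside `B` can be matched injectively with those edges. Hence
`S \ B` is a partial transversal, of size `2|E| - |E| = |E|`.
-/

lemma Finset.exists_injective_of_card_fiber_le {α β γ : Type*} [Fintype β] [DecidableEq γ]
    (s : Finset α) (p : α → γ) (q : β → γ) (h : ∀ c, #{a ∈ s | p a = c} ≤ #{b | q b = c}) :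
    ∃ φ : s → β, Function.Injective φ ∧ ∀ a, q (φ a) = p a := by
  have ι (c : γ) : {a ∈ s | p a = c} ↪ ({b | q b = c} : Finset β) := Classical.choice <|
    Function.Embedding.nonempty_of_card_le (by rw [Fintype.card_coe, Fintype.card_coe]; exact h c)
  have hq (c : γ) (x) : q (ι c x) = c := (mem_filter.1 (ι c x).2).2
  have hinj (c c' : γ) (x x') (hc : c = c') (hx : (ι c x : β) = ι c' x') : (x : α) = x' := by
    subst hc
    exact congrArg Subtype.val ((ι c).injective (Subtype.ext hx))
  refine ⟨fun a => ι (p a) ⟨a, mem_filter.2 ⟨a.2, rfl⟩⟩, fun a a' ha => ?_, fun a => hq _ _⟩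
  exact Subtype.ext (hinj _ _ _ _ (by simpa only [hq] using congrArg q ha) ha)

lemma alphaVec_sdiff_add_alphaVec [DecidableEq V] {X Y : Finset (V × ℕ)} (h : Y ⊆ X) (v : V) :
    alphaVec (X \ Y) v + alphaVec Y v = alphaVec X v := by
  rw [alphaVec, alphaVec, alphaVec, ← card_union_of_disjoint
    (disjoint_filter_filter sdiff_disjoint), ← filter_union, sdiff_union_of_subset h]

section Multigraph

variable [Fintype E] [DecidableEq V] (ends : E → Sym2 V)

lemma mdeg_summand_mk (x y v : V) :
    (if s(x, y) = s(v, v) then 2 else if v ∈ s(x, y) then 1 else 0)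
      = (if x = v then 1 else 0) + (if y = v then 1 else 0) := by
  by_cases hx : x = v <;> by_cases hy : y = v <;>
    simp_all [Sym2.mem_iff, eq_comm]

lemma mdeg_eq_card_add_card {u w : E → V} (huw : ∀ e, s(u e, w e) = ends e) (v : V) :
    mdeg ends v = #{e | u e = v} + #{e | w e = v} := by
  simp only [mdeg, card_filter, ← sum_add_distrib, ← huw, mdeg_summand_mk]

lemma sum_mdeg [Fintype V] : ∑ v, mdeg ends v = 2 * Fintype.card E := by
  have huw (e : E) : s((ends e).out.1, (ends e).out.2) = ends e := Quot.out_eq _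
  simp only [mdeg_eq_card_add_card ends huw, sum_add_distrib]
  rw [← card_eq_sum_card_fiberwise fun _ _ => mem_univ _,
    ← card_eq_sum_card_fiberwise fun _ _ => mem_univ _, card_univ, two_mul]

variable [Fintype V]

lemma alphaVec_mS (v : V) : alphaVec (mS ends) v = mdeg ends v := by
  have hfiber : {p ∈ mS ends | p.1 = v} = (Icc 1 (mdeg ends v)).image (v, ·) := by
    ext ⟨w, i⟩
    simp only [mS, mem_filter, mem_biUnion, mem_univ, true_and, mem_image, Prod.mk.injEq]
    aesop
  rw [alphaVec, hfiber, card_image_of_injective _ (Prod.mk_right_injective v), Nat.card_Icc]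
  omega

lemma card_mS : #(mS ends) = 2 * Fintype.card E := by
  rw [card_eq_sum_card_fiberwise (f := Prod.fst) fun _ _ => mem_univ _, ← sum_mdeg ends]
  exact sum_congr rfl fun v _ => alphaVec_mS ends v

variable {ends} in
lemma IsPT.subset_mS {F : Finset E} {B : Finset (V × ℕ)} (h : IsPT ends F B) : B ⊆ mS ends :=
  fun _ hb => let ⟨_, _, hf⟩ := h; filter_subset _ _ (hf _ hb).2

variable {ends} in
/-- A transversal orients every edge towards the endpoint of the element of `B` matched to it. -/
lemma IsPT.exists_endpoint_card_eq_alphaVec {B : Finset (V × ℕ)} (h : IsPT ends univ B)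
    (hcard : #B = Fintype.card E) :
    ∃ u : E → V, (∀ e, u e ∈ ends e) ∧ ∀ v, #{e | u e = v} = alphaVec B v := by
  classical
  obtain ⟨f, hinj, hf⟩ := h
  have himage : B.image f = univ := eq_univ_of_card _ (by rw [card_image_of_injOn hinj, hcard])
  have hsurj (e : E) : ∃ b ∈ B, f b = e := mem_image.1 (himage ▸ mem_univ e)
  choose b hbB hfb using hsurj
  have hbf {x} (hx : x ∈ B) : b (f x) = x := hinj (hbB _) hx (hfb _)
  refine ⟨fun e => (b e).1, fun e => ?_, fun v => ?_⟩
  · have hmem := (hf _ (hbB e)).2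
    rw [hfb] at hmem
    exact (mem_filter.1 hmem).2
  · have hfiber : ({e | (b e).1 = v} : Finset E) = {x ∈ B | x.1 = v}.image f := by
      ext e
      simp only [mem_filter, mem_univ, true_and, mem_image]
      exact ⟨fun he => ⟨b e, ⟨hbB e, he⟩, hfb e⟩, by rintro ⟨x, ⟨hx, rfl⟩, rfl⟩; rw [hbf hx]⟩
    rw [hfiber, card_image_of_injOn (hinj.mono (coe_subset.2 (filter_subset _ _))), alphaVec]

/-- `IsPT` asks for a total map `V × ℕ → E`, which does not exist when `E` is empty and `V` is
not. -/
lemma isPT_univ_of_alphaVec_le [Nonempty (V × ℕ → E)] {X : Finset (V × ℕ)} (hX : X ⊆ mS ends)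
    {w : E → V} (hw : ∀ e, w e ∈ ends e) (hle : ∀ v, alphaVec X v ≤ #{e | w e = v}) :
    IsPT ends univ X := by
  obtain ⟨φ, hφ, hwφ⟩ := X.exists_injective_of_card_fiber_le Prod.fst w hle
  let f (p : V × ℕ) : E := if hp : p ∈ X then φ ⟨p, hp⟩ else Classical.arbitrary (V × ℕ → E) p
  have hf {p} (hp : p ∈ X) : f p = φ ⟨p, hp⟩ := dif_pos hp
  refine ⟨f, fun p hp p' hp' h => ?_, fun p hp => ⟨mem_univ _, ?_⟩⟩
  · rw [hf hp, hf hp'] at h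
    exact congrArg Subtype.val (hφ h)
  · rw [hf hp, mA, mem_filter, ← hwφ ⟨p, hp⟩]
    exact ⟨hX hp, hw _⟩

end Multigraph

theorem stmt4_general [Fintype V] [Fintype E] [DecidableEq V] (ends : E → Sym2 V)
    (B : Finset (V × ℕ))
    (hPT : IsPT ends Finset.univ B) (hcard : B.card = Fintype.card E) :
    IsPT ends Finset.univ (mS ends \ B) ∧ (mS ends \ B).card = Fintype.card E := by
  have hB := hPT.subset_mS
  have : Nonempty (V × ℕ → E) := let ⟨f, _⟩ := hPT; ⟨f⟩
  obtain ⟨u, hu, hcount⟩ := hPT.exists_endpoint_card_eq_alphaVec hcard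
  refine ⟨isPT_univ_of_alphaVec_le ends sdiff_subset (fun e => Sym2.other_mem (hu e))
    fun v => ?_, ?_⟩
  · have hsplit := mdeg_eq_card_add_card ends (fun e => Sym2.other_spec (hu e)) v
    have hcompl := alphaVec_sdiff_add_alphaVec hB v
    rw [alphaVec_mS] at hcompl
    rw [hcount] at hsplit
    omega
  · rw [card_sdiff_of_subset hB, card_mS, hcard]
    omega

/-- `TM(G)` is identically self-dual: the complement in `S` of any
transversal of `(A(e), e ∈ E)` is again a transversal. -/
theorem stmt4 [Fintype V] [Fintype E] [DecidableEq V] (ends : E → Sym2 V)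
    (B : Finset (V × ℕ)) (hB : B ⊆ mS ends)
    (hPT : IsPT ends Finset.univ B) (hcard : B.card = Fintype.card E) :
    IsPT ends Finset.univ (mS ends \ B) ∧ (mS ends \ B).card = Fintype.card E :=
  stmt4_general ends B hPT hcard
end

section
/- Let W ⊆ V, let E₁ ⊆ E be the set of edges with both endpoints in V \ W, and let S(W) := {(v,i) ∈ S : v ∈ W}. For a set B ⊆ S \ S(W) with |B| = |E₁|, the following are equivalent: (i) B is a transversal of the set system 𝒜' = (A(e), e ∈ E₁); (ii) there exists a set B_X ⊆ S(W) such that B ∪ B_X is a transversal of the full system (A(e), e ∈ E). (Lemma 2.1: the contraction TM(G)/S(W) equals the transversal matroid M[𝒜'], stated via the basis characterization of contraction.) -/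
open Finset

variable {V E : Type*}

/-!
(i) ⇒ (ii): every edge outside `E₁` has an endpoint `v ∈ W`, and `v` has at least as many
slots `(v, i)` as incident edges, so these edges can be matched injectively into `S(W)`;
together with the matching of `B` into `E₁` this is a transversal of the full system.

(ii) ⇒ (i): a slot over `W` can only be matched to an edge outside `E₁`, and `B_X` has exactly
`|E| - |E₁|` elements, so `B_X` uses up all edges outside `E₁` and `B` is matched into `E₁`.
-/

lemma Finset.exists_mapsTo_injOn_of_card_le {α β : Type*} [Nonempty β] {s : Finset α}
    {t : Finset β} (h : #s ≤ #t) : ∃ f : α → β, Set.MapsTo f s t ∧ Set.InjOn f s := by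
  classical
  obtain ⟨emb⟩ : Nonempty (s ↪ t) := Function.Embedding.nonempty_of_card_le (by simpa using h)
  refine ⟨fun a => if ha : a ∈ s then emb ⟨a, ha⟩ else Classical.arbitrary β, ?_, ?_⟩
  · intro a ha
    simp [dif_pos (Finset.mem_coe.1 ha)]
  · intro a ha a' ha' heq
    simp only [dif_pos (Finset.mem_coe.1 ha), dif_pos (Finset.mem_coe.1 ha')] at heq
    simpa using emb.injective (Subtype.ext heq)

lemma Finset.exists_injOn_fiberwise_numbering {α β : Type*} [DecidableEq β] (s : Finset α)
    (w : α → β) (d : β → ℕ) (h : ∀ b, #{a ∈ s | w a = b} ≤ d b) :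
    ∃ g : α → ℕ, (∀ a ∈ s, g a ∈ Icc 1 (d (w a))) ∧ Set.InjOn (fun a => (w a, g a)) s := by
  have hfib : ∀ b, ∃ g : α → ℕ,
      Set.MapsTo g ↑(s.filter (w · = b)) (Icc 1 (d b)) ∧ Set.InjOn g ↑(s.filter (w · = b)) :=
    fun b => exists_mapsTo_injOn_of_card_le (t := Icc 1 (d b)) (by simpa using h b)
  choose g hmaps hinj using hfib
  refine ⟨fun a => g (w a) a, fun a ha => hmaps (w a) (by simp [ha]), ?_⟩
  intro a ha a' ha' heq
  obtain ⟨hw, hg⟩ := Prod.mk.inj heq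
  simp only at hw hg
  rw [← hw] at hg
  exact hinj (w a) (by simp [Finset.mem_coe.1 ha]) (by simp [Finset.mem_coe.1 ha', hw]) hg

lemma Finset.mapsTo_compl_of_injOn_union {α β : Type*} [DecidableEq α] {f : α → β}
    {B X : Finset α} {T : Finset β} (hinj : Set.InjOn f ↑(B ∪ X)) (hdisj : Disjoint B X)
    (hX : Set.MapsTo f X T) (hcard : #T ≤ #X) : Set.MapsTo f B (↑T)ᶜ := by
  intro b hb hbT
  have hXinj : Set.InjOn f X := hinj.mono (by simp)
  obtain ⟨x, hx, hfx⟩ := surjOn_of_injOn_of_card_le f hX hXinj hcard hbT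
  have hxb : x = b := hinj (by simp [Finset.mem_coe.1 hx]) (by simp [Finset.mem_coe.1 hb]) hfx
  exact disjoint_left.1 hdisj hb (hxb ▸ hx)

section Transversal

variable [Fintype V] [Fintype E] [DecidableEq V] (ends : E → Sym2 V)

lemma mem_mS {v : V} {i : ℕ} : (v, i) ∈ mS ends ↔ i ∈ Icc 1 (mdeg ends v) := by
  simp [mS]

omit [Fintype V] in
lemma card_filter_mem_ends_le_mdeg (v : V) : #{e | v ∈ ends e} ≤ mdeg ends v := by
  rw [mdeg, card_filter]
  refine sum_le_sum fun e _ => ?_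
  split_ifs <;> simp

lemma isPT_image [Nonempty E] {F : Finset E} {g : E → V × ℕ} (hinj : Set.InjOn g F)
    (hg : ∀ e ∈ F, g e ∈ mA ends e) : IsPT ends F (F.image g) := by
  refine ⟨Function.invFunOn g F, ?_, ?_⟩
  · rintro _ hb _ hb' heq
    obtain ⟨e, he, rfl⟩ := Finset.mem_image.1 hb
    obtain ⟨e', he', rfl⟩ := Finset.mem_image.1 hb'
    rw [hinj.leftInvOn_invFunOn he, hinj.leftInvOn_invFunOn he'] at heq
    rw [heq]
  · intro b hb
    obtain ⟨e, he, rfl⟩ := Finset.mem_image.1 hb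
    rw [hinj.leftInvOn_invFunOn he]
    exact ⟨he, hg e he⟩

lemma IsPT.union [DecidableEq E] {F F' : Finset E} {B B' : Finset (V × ℕ)}
    (h : IsPT ends F B) (h' : IsPT ends F' B') (hFF' : Disjoint F F') :
    IsPT ends (F ∪ F') (B ∪ B') := by
  obtain ⟨f, hinj, hf⟩ := h
  obtain ⟨f', hinj', hf'⟩ := h'
  refine ⟨fun b => if b ∈ B then f b else f' b, ?_, ?_⟩
  · have hFB : ∀ b ∈ B, ∀ c ∈ B', f b ≠ f' c := fun b hb c hc heq =>
      disjoint_left.1 hFF' (hf b hb).1 (heq ▸ (hf' c hc).1)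
    intro b hb c hc heq
    simp only [coe_union, Set.mem_union, Finset.mem_coe] at hb hc
    by_cases hbB : b ∈ B <;> by_cases hcB : c ∈ B <;> simp only [hbB, hcB, if_true, if_false] at heq
    · exact hinj hbB hcB heq
    · exact absurd heq (hFB b hbB c (hc.resolve_left hcB))
    · exact absurd heq.symm (hFB c hcB b (hb.resolve_left hbB))
    · exact hinj' (hb.resolve_left hbB) (hc.resolve_left hcB) heq
  · intro b hb
    by_cases hbB : b ∈ B
    · simp only [hbB, if_true]
      exact ⟨mem_union_left _ (hf b hbB).1, (hf b hbB).2⟩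
    · have := hf' b ((mem_union.1 hb).resolve_left hbB)
      simp only [hbB, if_false]
      exact ⟨mem_union_right _ this.1, this.2⟩

lemma IsPT.union_image [DecidableEq E] {F F' : Finset E} {B : Finset (V × ℕ)}
    {g : E → V × ℕ} (h : IsPT ends F B) (hinj : Set.InjOn g F')
    (hg : ∀ e ∈ F', g e ∈ mA ends e) (hFF' : Disjoint F F') :
    IsPT ends (F ∪ F') (B ∪ F'.image g) := by
  -- `isPT_image` inverts `g` and so needs a default edge, which exists once `F'` is nonempty.
  rcases F'.eq_empty_or_nonempty with rfl | ⟨e₀, -⟩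
  · simpa using h
  · have : Nonempty E := ⟨e₀⟩
    exact h.union ends (isPT_image ends hinj hg) hFF'

lemma exists_injOn_slots (W : Finset V) (F : Finset E) (hF : ∀ e ∈ F, ∃ v ∈ ends e, v ∈ W) :
    ∃ g : E → V × ℕ, Set.InjOn g F ∧ ∀ e ∈ F, g e ∈ mA ends e ∧ (g e).1 ∈ W := by
  have hw : ∀ e, ∃ v ∈ ends e, e ∈ F → v ∈ W := fun e => by
    by_cases he : e ∈ F
    · obtain ⟨v, hv, hvW⟩ := hF e he
      exact ⟨v, hv, fun _ => hvW⟩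
    · induction ends e using Sym2.ind with
      | _ x y => exact ⟨x, Sym2.mem_mk_left x y, (absurd · he)⟩
  choose w hw_ends hw_W using hw
  have hfib : ∀ v, #{e ∈ F | w e = v} ≤ mdeg ends v := fun v =>
    (card_le_card fun e he => by
      obtain ⟨-, rfl⟩ := mem_filter.1 he
      simpa using hw_ends e).trans (card_filter_mem_ends_le_mdeg ends v)
  obtain ⟨g, hg, hinj⟩ := Finset.exists_injOn_fiberwise_numbering F w (mdeg ends) hfib
  exact ⟨fun e => (w e, g e), hinj, fun e he =>
    ⟨mem_filter.2 ⟨(mem_mS ends).2 (hg e he), hw_ends e⟩, hw_W e he⟩⟩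

lemma IsPT.of_union [DecidableEq E] {F : Finset E} {B X : Finset (V × ℕ)}
    (h : IsPT ends univ (B ∪ X)) (hdisj : Disjoint B X)
    (hX : ∀ x ∈ X, ∀ e, x ∈ mA ends e → e ∉ F) (hcard : #Fᶜ ≤ #X) : IsPT ends F B := by
  obtain ⟨f, hinj, hf⟩ := h
  have hXF : Set.MapsTo f X ↑Fᶜ := fun x hx =>
    mem_compl.2 (hX x hx _ (hf x (mem_union_right _ hx)).2)
  have hBF := Finset.mapsTo_compl_of_injOn_union hinj hdisj hXF hcard
  refine ⟨f, hinj.mono (by simp), fun b hb => ⟨?_, (hf b (mem_union_left _ hb)).2⟩⟩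
  simpa using hBF hb

end Transversal

/-- Lemma 2.1: for `B ⊆ S \ S(W)` with `|B| = |E₁|`, `B` is a transversal of
`𝒜' = (A(e), e ∈ E₁)` iff there is `B_X ⊆ S(W)` with `B ∪ B_X` a transversal of the full
system `(A(e), e ∈ E)`. -/
theorem stmt6 [Fintype V] [Fintype E] [DecidableEq V] (ends : E → Sym2 V)
    (W : Finset V) (E₁ : Finset E) (hE₁ : ∀ e, e ∈ E₁ ↔ ∀ v ∈ ends e, v ∉ W)
    (B : Finset (V × ℕ)) (hB : B ⊆ mS ends \ (mS ends).filter (fun p => p.1 ∈ W))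
    (hcard : B.card = E₁.card) :
    (IsPT ends E₁ B ∧ B.card = E₁.card) ↔
      ∃ BX ⊆ (mS ends).filter (fun p => p.1 ∈ W),
        IsPT ends Finset.univ (B ∪ BX) ∧ (B ∪ BX).card = Fintype.card E := by
  classical
  have hdisj : ∀ X ⊆ (mS ends).filter (fun p => p.1 ∈ W), Disjoint B X := fun X hX =>
    disjoint_of_subset_right hX (subset_sdiff.1 hB).2
  constructor
  · rintro ⟨hPT, -⟩
    obtain ⟨g, hinj, hg⟩ := exists_injOn_slots ends W E₁ᶜ fun e he => by simpa [hE₁] using he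
    have hXW : E₁ᶜ.image g ⊆ (mS ends).filter (fun p => p.1 ∈ W) := fun p hp => by
      obtain ⟨e, he, rfl⟩ := Finset.mem_image.1 hp
      exact mem_filter.2 ⟨(mem_filter.1 (hg e he).1).1, (hg e he).2⟩
    refine ⟨_, hXW, ?_, ?_⟩
    · simpa using hPT.union_image ends hinj (fun e he => (hg e he).1) disjoint_compl_right
    · rw [card_union_of_disjoint (hdisj _ hXW), hcard, card_image_of_injOn hinj,
        card_add_card_compl]
  · rintro ⟨X, hXW, hPT, hXcard⟩
    refine ⟨hPT.of_union ends (hdisj X hXW) (fun x hx e hxe he => ?_) ?_, hcard⟩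
    · exact (hE₁ e).1 he x.1 (mem_filter.1 hxe).2 (mem_filter.1 (hXW hx)).2
    · rw [card_union_of_disjoint (hdisj X hXW)] at hXcard
      have := card_add_card_compl E₁
      omega
end

section
/- Let W ⊆ V and let E₁ ⊆ E be the set of edges with both endpoints in V \ W. If B is a transversal of the set system 𝒜' = (A(e), e ∈ E₁), then there exists an orientation 𝒪 of G[V\W] such that for every v ∈ V \ W, the number of indices i with (v,i) ∈ B equals deg⁺_𝒪(v). (Claim in the proof of Theorem 2: every basis of M[𝒜'] is an 𝒪-basis for some orientation 𝒪.) -/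
open Finset

variable {V E : Type*}

theorem Set.InjOn.exists_comp_eq {α β γ : Type*} {f : α → β} {s : Set α} (hf : s.InjOn f)
    (h : α → γ) (g₀ : β → γ) : ∃ g : β → γ, ∀ a ∈ s, g (f a) = h a :=
  ⟨Function.extend (s.domRestrict f) (s.domRestrict h) g₀,
    fun a ha => hf.injective.extend_apply _ _ ⟨a, ha⟩⟩

theorem Finset.card_filter_image_of_injOn {α β γ : Type*} [DecidableEq β] {f : α → β}
    {s : Finset α} (hf : Set.InjOn f s) {g : β → γ} {h : α → γ}
    (hgh : ∀ a ∈ s, g (f a) = h a) (p : γ → Prop) [DecidablePred p] :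
    #((s.image f).filter fun b => p (g b)) = #(s.filter fun a => p (h a)) := by
  rw [filter_image, card_image_of_injOn (hf.mono (coe_subset.mpr (filter_subset _ _)))]
  exact congrArg card (filter_congr fun a ha => by simp only [hgh a ha])

theorem stmt9_general [Fintype V] [Fintype E] [DecidableEq V] (ends : E → Sym2 V)
    (W : Finset V) (E₁ : Finset E)
    (B : Finset (V × ℕ)) (hPT : IsPT ends E₁ B) (hcard : B.card = E₁.card) :
    ∃ tail : E → V, (∀ e ∈ E₁, tail e ∈ ends e) ∧
      ∀ v ∉ W, alphaVec B v = (E₁.filter fun e => tail e = v).card := by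
  classical
  obtain ⟨f, hinj, hf⟩ := hPT
  have himage : B.image f = E₁ :=
    eq_of_subset_of_card_le (image_subset_iff.mpr fun b hb => (hf b hb).1)
      (by rw [card_image_of_injOn hinj, hcard])
  -- orient the edge matched to `(v, i)` away from `v`; other edges get an arbitrary endpoint
  obtain ⟨tail, htail⟩ := hinj.exists_comp_eq Prod.fst fun e => (ends e).out.1
  subst himage
  refine ⟨tail, forall_mem_image.mpr fun b hb => ?_, fun v _ => ?_⟩
  · rw [htail b hb]
    exact (mem_filter.mp (hf b hb).2).2
  · exact (card_filter_image_of_injOn hinj htail (· = v)).symm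

/-- every transversal `B` of `𝒜' = (A(e), e ∈ E₁)` arises from an orientation:
there is a tail map `𝒪` of `G[V\W]` such that, for each `v ∈ V \ W`, the number of indices
`i` with `(v,i) ∈ B` equals `deg⁺_𝒪(v)`. -/
theorem stmt9 [Fintype V] [Fintype E] [DecidableEq V] (ends : E → Sym2 V)
    (W : Finset V) (E₁ : Finset E) (hE₁ : ∀ e, e ∈ E₁ ↔ ∀ v ∈ ends e, v ∉ W)
    (B : Finset (V × ℕ)) (hPT : IsPT ends E₁ B) (hcard : B.card = E₁.card) :
    ∃ tail : E → V, (∀ e ∈ E₁, tail e ∈ ends e) ∧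
      ∀ v ∉ W, alphaVec B v = (E₁.filter fun e => tail e = v).card :=
  stmt9_general ends W E₁ B hPT hcard
end
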